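/- Let v be a finite type invariant of degree ≤ 2 and for each n ≥ 0 let wₙ = A₁A₁A₂A₂…AₙAₙ be the signed word with n letters, all positive, in which the two occurrences of each letter are adjacent. Then v(wₙ) = v(φ) + n·(v(AA) − v(φ)) + (n(n−1)/2)·(v(AABB) − 2v(AA) + v(φ)), where AA = w₁ and AABB = w₂. -/

import Mathlib

/-- Letters are indexed by natural numbers; a signed letter carries a sign
(`true` = `+`, `false` = `−`). -/
abbrev Letter : Type := ℕ × Bool

/-- A signed word: every entry occurs exactly twice, and the two occurrences of
any letter carry the same sign. -/
def IsSignedWord (w : List Letter) : Prop :=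
  ∀ p ∈ w, w.count p = 2 ∧ ∀ q ∈ w, q.1 = p.1 → q.2 = p.2

/-- Signed words (concrete representatives; isomorphism is subsumed by cyclic
equivalence below). -/
def SignedWord : Type := {w : List Letter // IsSignedWord w}

/-- The set of letters occurring in a list of signed letters. -/
def lettersL (w : List Letter) : Finset ℕ := (w.map Prod.fst).toFinset

/-- The set of letters of a signed word. -/
def SignedWord.letters (w : SignedWord) : Finset ℕ := lettersL w.1

/-- The number of (distinct) letters of a signed word. -/
def SignedWord.numLetters (w : SignedWord) : ℕ := w.letters.card

theorem isSignedWord_filter (q : ℕ → Bool) {w : List Letter} (hw : IsSignedWord w) :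
    IsSignedWord (w.filter fun p => q p.1) := by
  intro p hp
  rw [List.mem_filter] at hp
  refine ⟨?_, fun r hr => (hw p hp.1).2 r (List.mem_filter.mp hr).1⟩
  rw [List.count_filter (p := fun r : Letter => q r.1) hp.2]
  exact (hw p hp.1).1

/-- Delete both occurrences of every letter of `T` from `w`. -/
def SignedWord.delete (w : SignedWord) (T : Finset ℕ) : SignedWord :=
  ⟨w.1.filter fun p => decide (p.1 ∉ T), isSignedWord_filter (fun a => decide (a ∉ T)) w.2⟩

/-- The induced signed subword of `w` on a set `U` of letters. -/
def SignedWord.restrict (w : SignedWord) (U : Finset ℕ) : SignedWord :=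
  ⟨w.1.filter fun p => decide (p.1 ∈ U), isSignedWord_filter (fun a => decide (a ∈ U)) w.2⟩

/-- Sign-preserving relabeling of letters. -/
def Iso (w w' : List Letter) : Prop :=
  ∃ f : ℕ ≃ ℕ, w' = w.map fun p => (f p.1, p.2)

/-- The basic move `A^ε x A^ε y ↦ x A^(−ε) y A^(−ε)`. -/
def Move (w w' : List Letter) : Prop :=
  ∃ (a : ℕ) (s : Bool) (x y : List Letter),
    w = (a, s) :: (x ++ (a, s) :: y) ∧ w' = x ++ (a, !s) :: (y ++ [(a, !s)])

/-- Cyclic equivalence of signed words: the equivalence relation generated by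
isomorphism together with the basic move. -/
def CyclicEquivL : List Letter → List Letter → Prop :=
  Relation.EqvGen fun w w' => Iso w w' ∨ Move w w'

/-- Cyclic equivalence of signed words. -/
def SignedWord.CyclicEquiv (w w' : SignedWord) : Prop := CyclicEquivL w.1 w'.1

/-- A cyclic equivalence invariant with values in `F`. -/
def WordInvariant (F : Type*) [Field F] (v : SignedWord → F) : Prop :=
  ∀ w w' : SignedWord, w.CyclicEquiv w' → v w = v w'

/-- The prolongation of `v` to the singular signed word `(w, S)` (the letters of
`S` being declared singular), given by inclusion–exclusion. -/
def prolong (F : Type*) [Field F] (v : SignedWord → F) (w : SignedWord) (S : Finset ℕ) : F :=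
  ∑ T ∈ S.powerset, (-1 : F) ^ T.card * v (w.delete T)

/-- `v` is a finite type invariant of degree ≤ `n`: it is a cyclic equivalence
invariant whose prolongation vanishes on every singular signed word with more
than `n` singular letters. -/
def FiniteTypeLe (F : Type*) [Field F] (n : ℕ) (v : SignedWord → F) : Prop :=
  WordInvariant F v ∧
    ∀ (w : SignedWord) (S : Finset ℕ), S ⊆ w.letters → n < S.card →
      prolong F v w S = 0

/-- The empty signed word `φ`. -/
def wordEmpty : SignedWord := ⟨[], by intro p hp; simp at hp⟩

/-- The one-letter positive signed word `AA`. -/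
def wordAA : SignedWord := ⟨[(0, true), (0, true)], by unfold IsSignedWord; decide⟩

/-- The one-letter negative signed word `ĀĀ`. -/
def wordAAneg : SignedWord := ⟨[(0, false), (0, false)], by unfold IsSignedWord; decide⟩

/-- The two-letter signed word `AABB`. -/
def wordAABB : SignedWord := ⟨[(0, true), (0, true), (1, true), (1, true)], by unfold IsSignedWord; decide⟩

/-- The two-letter signed word `AAB̄B̄`. -/
def wordAABnBn : SignedWord := ⟨[(0, true), (0, true), (1, false), (1, false)], by unfold IsSignedWord; decide⟩

/-- The two-letter signed word `AB̄B̄A`. -/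
def wordABnBnA : SignedWord := ⟨[(0, true), (1, false), (1, false), (0, true)], by unfold IsSignedWord; decide⟩

/-- The two-letter signed word `ABAB`. -/
def wordABAB : SignedWord := ⟨[(0, true), (1, true), (0, true), (1, true)], by unfold IsSignedWord; decide⟩

/-- The underlying list of the word `A₁A₁A₂A₂…AₙAₙ` (all letters positive). -/
def wListN (n : ℕ) : List Letter := (List.range n).flatMap fun i => [(i, true), (i, true)]

/-- `Ncount u w`: the number of `k`-element subsets of the letters of `w`
(`k` = number of letters of `u`) whose induced signed subword is cyclically
equivalent to (an isomorphic copy of) `u`. -/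
noncomputable def Ncount (u w : SignedWord) : ℕ := by
  classical
  exact (w.letters.powerset.filter fun U =>
    U.card = u.numLetters ∧ (w.restrict U).CyclicEquiv u).card

theorem prolong_add (F : Type*) [Field F] (v₁ v₂ : SignedWord → F) (w : SignedWord) (S : Finset ℕ) :
    prolong F (v₁ + v₂) w S = prolong F v₁ w S + prolong F v₂ w S := by
  simp [prolong, ← Finset.sum_add_distrib, mul_add]

theorem prolong_smul (F : Type*) [Field F] (c : F) (v : SignedWord → F) (w : SignedWord) (S : Finset ℕ) :
    prolong F (c • v) w S = c * prolong F v w S := by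
  rw [prolong, prolong, Finset.mul_sum]
  exact Finset.sum_congr rfl fun T _ => by simp [mul_left_comm]

/-- The `F`-vector space `Vₙ` of finite type invariants of degree ≤ `n`. -/
def Vn (F : Type*) [Field F] (n : ℕ) : Submodule F (SignedWord → F) where
  carrier := {v | FiniteTypeLe F n v}
  add_mem' := by
    rintro v₁ v₂ ⟨h1, h1'⟩ ⟨h2, h2'⟩
    refine ⟨fun w w' h => by simp [h1 w w' h, h2 w w' h], fun w S hS hc => ?_⟩
    rw [prolong_add, h1' w S hS hc, h2' w S hS hc, add_zero]
  zero_mem' := ⟨fun _ _ _ => rfl, fun w S hS hc => by simp [prolong]⟩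
  smul_mem' := by
    rintro c v ⟨h, h'⟩
    refine ⟨fun w w' hww => by simp [h w w' hww], fun w S hS hc => ?_⟩
    rw [prolong_smul, h' w S hS hc, mul_zero]

/-- Cyclic equivalence as a setoid on signed words. -/
def cycSetoid : Setoid SignedWord :=
  ⟨SignedWord.CyclicEquiv, fun w => Relation.EqvGen.refl w.1,
    fun h => Relation.EqvGen.symm _ _ h, fun h h' => Relation.EqvGen.trans _ _ _ h h'⟩

/-!
Deleting any `k` letters from `wₙ` leaves a word isomorphic to `wₙ₋ₖ`, so the prolongation of `v`
on `wₖ₊₃` with three singular letters is the third forward difference of `n ↦ v(wₙ)` at `k`.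
For `v` of degree `≤ 2` it vanishes, and the Gregory–Newton formula expresses `v(wₙ)` through
`v(w₀) = v(φ)`, `v(w₁) = v(AA)` and `v(w₂) = v(AABB)`.
-/

open Finset fwdDiff

theorem exists_equiv_map_eq_of_nodup {α : Type*} [DecidableEq α] :
    ∀ {l l' : List α}, l.Nodup → l'.Nodup → l.length = l'.length → ∃ f : α ≃ α, l.map f = l'
  | [], [], _, _, _ => ⟨Equiv.refl α, rfl⟩
  | a :: l, b :: l', hl, hl', hlen => by
    rw [List.nodup_cons] at hl hl'
    obtain ⟨g, hg⟩ := exists_equiv_map_eq_of_nodup hl.2 hl'.2 (by simpa using hlen)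
    refine ⟨g.trans (Equiv.swap (g a) b), ?_⟩
    simp only [List.map_cons, Equiv.trans_apply, Equiv.swap_apply_left, List.cons.injEq, true_and]
    rw [← hg]
    refine List.map_congr_left fun x hx => Equiv.swap_apply_of_ne_of_ne
      (g.injective.ne (ne_of_mem_of_not_mem hx hl.1)) fun hxb => hl'.1 ?_
    rw [← hxb, ← hg]
    exact List.mem_map_of_mem hx

def doubledWord (l : List ℕ) : List Letter := l.flatMap fun i => [(i, true), (i, true)]

theorem wListN_eq_doubledWord (n : ℕ) : wListN n = doubledWord (List.range n) := rfl

theorem doubledWord_map (f : ℕ → ℕ) (l : List ℕ) :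
    doubledWord (l.map f) = (doubledWord l).map fun p => (f p.1, p.2) := by
  simp [doubledWord, List.flatMap_map, List.map_flatMap]

theorem doubledWord_filter (q : ℕ → Bool) (l : List ℕ) :
    (doubledWord l).filter (fun p => q p.1) = doubledWord (l.filter q) := by
  induction l with
  | nil => rfl
  | cons a l ih => by_cases h : q a <;> simp_all [doubledWord]

theorem mem_doubledWord {l : List ℕ} {p : Letter} : p ∈ doubledWord l ↔ p.1 ∈ l ∧ p.2 = true := by
  obtain ⟨i, s⟩ := p
  simp [doubledWord, and_comm]

theorem count_doubledWord (l : List ℕ) (i : ℕ) :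
    (doubledWord l).count (i, true) = 2 * l.count i := by
  induction l with
  | nil => rfl
  | cons a l ih =>
    simp only [doubledWord, List.flatMap_cons, List.count_append, List.count_cons] at ih ⊢
    rw [ih]
    grind

theorem isSignedWord_doubledWord {l : List ℕ} (hl : l.Nodup) : IsSignedWord (doubledWord l) := by
  rintro ⟨i, s⟩ hp
  obtain ⟨hi, rfl⟩ := mem_doubledWord.mp hp
  exact ⟨by rw [count_doubledWord, List.count_eq_one_of_mem hl hi],
    fun q hq _ => (mem_doubledWord.mp hq).2⟩

theorem iso_doubledWord {l l' : List ℕ} (hl : l.Nodup) (hl' : l'.Nodup)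
    (hlen : l.length = l'.length) : Iso (doubledWord l) (doubledWord l') := by
  obtain ⟨f, rfl⟩ := exists_equiv_map_eq_of_nodup hl hl' hlen
  exact ⟨f, doubledWord_map f l⟩

def chain (n : ℕ) : SignedWord := ⟨wListN n, isSignedWord_doubledWord List.nodup_range⟩

theorem letters_chain (n : ℕ) : (chain n).letters = range n := by
  ext a
  simp [chain, SignedWord.letters, lettersL, wListN_eq_doubledWord, mem_doubledWord]

theorem WordInvariant.apply_delete_chain {F : Type*} [Field F] {v : SignedWord → F}
    (hv : WordInvariant F v) {n : ℕ} {T : Finset ℕ} (hT : T ⊆ range n) :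
    v ((chain n).delete T) = v (chain (n - #T)) := by
  have hlen : ((List.range n).filter fun a => decide (a ∉ T)).length = n - #T := by
    have hcard : #(range n \ T) = n - #T := by rw [card_sdiff_of_subset hT, card_range]
    rw [← hcard, sdiff_eq_filter]
    rfl
  refine hv _ _ (Relation.EqvGen.rel _ _ (Or.inl ?_))
  change Iso ((doubledWord (List.range n)).filter fun p => decide (p.1 ∉ T))
    (doubledWord (List.range (n - #T)))
  rw [doubledWord_filter (fun a => decide (a ∉ T))]
  exact iso_doubledWord (List.nodup_range.filter _) List.nodup_range (by rw [hlen, List.length_range])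

theorem FiniteTypeLe.fwdDiff_iter_three_chain {F : Type*} [Field F] {v : SignedWord → F}
    (hv : FiniteTypeLe F 2 v) (k : ℕ) : (Δ_[1])^[3] (fun n => v (chain n)) k = 0 := by
  have hS : range 3 ⊆ range (k + 3) := range_subset_range.mpr (by omega)
  have hprolong := hv.2 (chain (k + 3)) (range 3) (letters_chain (k + 3) ▸ hS) (by simp)
  rw [prolong, sum_congr rfl fun T hT => by
      rw [hv.1.apply_delete_chain ((mem_powerset.mp hT).trans hS)],
    sum_powerset_apply_card (fun c => (-1 : F) ^ c * v (chain (k + 3 - c)))] at hprolong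
  rw [fwdDiff_iter_eq_sum_shift]
  simp only [card_range, sum_range_succ, sum_range_zero, Nat.reduceAdd, Nat.reduceSubDiff,
    tsub_zero, Nat.choose_zero_right, Nat.choose_one_right, Nat.choose_succ_self_right,
    Nat.choose_self, nsmul_eq_mul, zsmul_eq_mul, Int.cast_mul, Int.cast_pow, Int.cast_neg,
    Int.cast_natCast] at hprolong ⊢
  linear_combination hprolong

theorem eq_quadratic_of_fwdDiff_iter_three_eq_zero {G : Type*} [AddCommGroup G] {f : ℕ → G}
    (hf : ∀ k, (Δ_[1])^[3] f k = 0) (n : ℕ) :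
    f n = f 0 + n • (f 1 - f 0) + n.choose 2 • (f 2 - 2 • f 1 + f 0) := by
  set g : ℕ → G := fun k => n.choose k • (Δ_[1])^[k] f 0
  have hg : ∀ k, 3 ≤ k ∨ n < k → g k = 0 := by
    rintro k (hk | hk)
    · obtain ⟨m, rfl⟩ := Nat.exists_eq_add_of_le' hk
      have hzero : (Δ_[1])^[m] (0 : ℕ → G) = 0 :=
        Function.iterate_fixed (fwdDiff_const (1 : ℕ) (0 : G)) m
      simp only [g, Function.iterate_add_apply, show (Δ_[1])^[3] f = 0 from funext hf, hzero,
        Pi.zero_apply, smul_zero]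
    · simp only [g, Nat.choose_eq_zero_of_lt hk, zero_smul]
  have hsum : ∑ k ∈ range (n + 1), g k = ∑ k ∈ range 3, g k :=
    calc ∑ k ∈ range (n + 1), g k = ∑ k ∈ range (n + 3), g k :=
          sum_subset (range_subset_range.mpr (by omega)) fun k _ hk => hg k (by simp at hk; omega)
      _ = ∑ k ∈ range 3, g k :=
          (sum_subset (range_subset_range.mpr (by omega)) fun k _ hk =>
            hg k (by simp at hk; omega)).symm
  have newton := shift_eq_sum_fwdDiff_iter 1 f n 0
  rw [zero_add, smul_eq_mul, mul_one, hsum] at newton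
  have hΔ1 : (Δ_[1]) f 0 = f 1 - f 0 := rfl
  have hΔ2 : (Δ_[1])^[2] f 0 = f 2 - 2 • f 1 + f 0 := by
    simp only [Function.iterate_succ_apply, Function.iterate_zero_apply, fwdDiff]
    abel
  rw [newton]
  simp only [g, sum_range_succ, sum_range_zero, Function.iterate_zero_apply,
    Function.iterate_one, hΔ1, hΔ2, Nat.choose_zero_right, Nat.choose_one_right, one_smul, zero_add]

theorem finiteTypeLe_two_on_chain_general (F : Type*) [Field F]
    (v : SignedWord → F) (hv : FiniteTypeLe F 2 v) (n : ℕ)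
    (w : SignedWord) (hw : w.1 = wListN n) :
    v w = v wordEmpty + (n : F) * (v wordAA - v wordEmpty) +
      ((n * (n - 1) / 2 : ℕ) : F) * (v wordAABB - 2 * v wordAA + v wordEmpty) := by
  obtain rfl : w = chain n := Subtype.ext hw
  have h0 : chain 0 = wordEmpty := rfl
  have h1 : chain 1 = wordAA := rfl
  have h2 : chain 2 = wordAABB := rfl
  rw [eq_quadratic_of_fwdDiff_iter_three_eq_zero hv.fwdDiff_iter_three_chain n, h0, h1, h2,
    ← Nat.choose_two_right, nsmul_eq_mul, nsmul_eq_mul, nsmul_eq_mul, Nat.cast_ofNat]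

/-- a finite type invariant of degree ≤ 2 satisfies
`v(wₙ) = v(φ) + n·(v(AA) − v(φ)) + (n(n−1)/2)·(v(AABB) − 2v(AA) + v(φ))`
on the word `wₙ = A₁A₁A₂A₂…AₙAₙ`. -/
theorem finiteTypeLe_two_on_chain (F : Type*) [Field F] [CharZero F]
    (v : SignedWord → F) (hv : FiniteTypeLe F 2 v) (n : ℕ)
    (w : SignedWord) (hw : w.1 = wListN n) :
    v w = v wordEmpty + (n : F) * (v wordAA - v wordEmpty) +
      ((n * (n - 1) / 2 : ℕ) : F) * (v wordAABB - 2 * v wordAA + v wordEmpty) :=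
  finiteTypeLe_two_on_chain_general F v hv n w hw
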